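/- Let K be a strongly connected, locally strongly connected, pure, foldable simplicial complex. Then the odd subcomplex of K is empty and the group of projectivities Π(K,σ0) is trivial for every facet σ0 of K. In particular, ⟨α⟩ = ⟨β⟩ for any two facet paths α and β from σ to τ, for any two facets σ, τ of K. -/

import Mathlib

set_option linter.unusedVariables false

open scoped Classical
noncomputable section

/-- An abstract simplicial complex on the vertex type `V`: a nonempty-downward-closed
family of nonempty finite vertex sets (the faces). -/
structure SComplex (V : Type) where
  faces : Set (Finset V)
  nonempty_of_mem : ∀ s ∈ faces, s.Nonempty
  down_closed : ∀ s ∈ faces, ∀ t, t ⊆ s → t.Nonempty → t ∈ faces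

namespace SComplex

variable {V V' W : Type}

/-- A facet is an inclusion-maximal face. -/
def IsFacet (K : SComplex V) (σ : Finset V) : Prop :=
  σ ∈ K.faces ∧ ∀ τ ∈ K.faces, σ ⊆ τ → σ = τ

/-- A simplicial complex is pure of dimension `d` if every facet has `d + 1` vertices. -/
def Pure (K : SComplex V) (d : ℕ) : Prop :=
  ∀ σ, K.IsFacet σ → σ.card = d + 1

/-- Two facets are adjacent (neighboring) if they share a ridge, i.e. a common
codimension-1 face. -/
def Adj (K : SComplex V) (σ τ : Finset V) : Prop :=
  K.IsFacet σ ∧ K.IsFacet τ ∧ σ ≠ τ ∧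
    (σ ∩ τ).card + 1 = σ.card ∧ (σ ∩ τ).card + 1 = τ.card

/-- A facet path is a nonempty sequence of facets in which consecutive facets
are adjacent along a ridge. -/
def IsFacetPath (K : SComplex V) : List (Finset V) → Prop
  | [] => False
  | [σ] => K.IsFacet σ
  | σ :: τ :: rest => K.Adj σ τ ∧ IsFacetPath K (τ :: rest)

/-- A facet path from `σ` to `τ`. -/
def IsPathFrom (K : SComplex V) (γ : List (Finset V)) (σ τ : Finset V) : Prop :=
  K.IsFacetPath γ ∧ γ.head? = some σ ∧ γ.getLast? = some τ

/-- A closed facet path based at the facet `σ0`. -/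
def IsClosedPathAt (K : SComplex V) (σ0 : Finset V) (γ : List (Finset V)) : Prop :=
  K.IsPathFrom γ σ0 σ0

/-- A pure simplicial complex is strongly connected if any two facets are joined
by a facet path (equivalently, the dual graph is connected). -/
def StronglyConnected (K : SComplex V) : Prop :=
  ∀ σ τ, K.IsFacet σ → K.IsFacet τ → ∃ γ, K.IsPathFrom γ σ τ

/-- The (closed) star of a face: all faces contained in a common face with `f`. -/
def star (K : SComplex V) (f : Finset V) : SComplex V where
  faces := {s | s ∈ K.faces ∧ ∃ t ∈ K.faces, f ⊆ t ∧ s ⊆ t}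
  nonempty_of_mem s hs := K.nonempty_of_mem s hs.1
  down_closed s hs t ht htne :=
    ⟨K.down_closed s hs.1 t ht htne,
      hs.2.elim fun u hu => ⟨u, hu.1, hu.2.1, ht.trans hu.2.2⟩⟩

/-- The link of a face `f`: all faces disjoint from `f` whose union with `f`
is again a face. -/
def link (K : SComplex V) (f : Finset V) : SComplex V where
  faces := {s | s ∈ K.faces ∧ s ∩ f = ∅ ∧ s ∪ f ∈ K.faces}
  nonempty_of_mem s hs := K.nonempty_of_mem s hs.1
  down_closed s hs t ht htne :=
    ⟨K.down_closed s hs.1 t ht htne,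
      Finset.eq_empty_of_forall_notMem fun v hv => by
        have := hs.2.1
        have hvs : v ∈ s ∩ f := Finset.mem_inter.2 ⟨ht (Finset.mem_inter.1 hv).1,
          (Finset.mem_inter.1 hv).2⟩
        simp [this] at hvs,
      K.down_closed (s ∪ f) hs.2.2 (t ∪ f) (Finset.union_subset_union ht (le_refl f))
        (htne.elim fun v hv => ⟨v, Finset.mem_union_left f hv⟩)⟩

/-- Locally strongly connected: the star of every face is strongly connected. -/
def LocallyStronglyConnected (K : SComplex V) : Prop :=
  ∀ f ∈ K.faces, (K.star f).StronglyConnected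

/-- The closed geometric simplex spanned by a finite vertex set, inside `V → ℝ`. -/
def closedSimplex (σ : Finset V) : Set (V → ℝ) :=
  {x | (∀ v, x v ≠ 0 → v ∈ σ) ∧ (∀ v, 0 ≤ x v) ∧ ∑ v ∈ σ, x v = 1}

/-- The geometric realization `|K|` of a simplicial complex, as a subspace of `V → ℝ`. -/
def space (K : SComplex V) : Set (V → ℝ) :=
  {x | ∃ σ ∈ K.faces, x ∈ closedSimplex σ}

/-- The barycenter of a face. -/
def barycenter (σ : Finset V) : V → ℝ :=
  fun v => if v ∈ σ then (σ.card : ℝ)⁻¹ else 0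

/-- A one-dimensional complex (graph) is bipartite if its vertices can be two-colored
properly. -/
def IsBipartite (G : SComplex V) : Prop :=
  ∃ c : V → Bool, ∀ e ∈ G.faces, ∀ v ∈ e, ∀ w ∈ e, v ≠ w → c v ≠ c w

/-- A codimension-2 face of a pure `d`-dimensional complex is odd if its link is
a non-bipartite graph. -/
def OddFace (K : SComplex V) (d : ℕ) (f : Finset V) : Prop :=
  f ∈ K.faces ∧ f.card + 2 = d + 1 ∧ ¬ IsBipartite (K.link f)

/-- The faces of the odd subcomplex: all odd codimension-2 faces together with their
(nonempty) subsets. -/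
def oddFaces (K : SComplex V) (d : ℕ) : Set (Finset V) :=
  {s | s.Nonempty ∧ ∃ f, K.OddFace d f ∧ s ⊆ f}

/-- The odd subcomplex `K_odd`. -/
def oddComplex (K : SComplex V) (d : ℕ) : SComplex V where
  faces := K.oddFaces d
  nonempty_of_mem s hs := hs.1
  down_closed s hs t hts htne := ⟨htne, hs.2.elim fun f hf => ⟨f, hf.1, hts.trans hf.2⟩⟩

/-- The geometric realization `|K_odd|` of the odd subcomplex. -/
def oddReal (K : SComplex V) (d : ℕ) : Set (V → ℝ) :=
  {x | ∃ f, K.OddFace d f ∧ x ∈ closedSimplex f}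

/-- A proper vertex coloring: on every face all vertices receive distinct colors. -/
def IsProperColoring {α : Type*} (K : SComplex V) (c : V → α) : Prop :=
  ∀ s ∈ K.faces, Set.InjOn c ↑s

/-- A pure `d`-dimensional complex is foldable if its graph admits a proper coloring
with `d + 1` colors. -/
def Foldable (K : SComplex V) (d : ℕ) : Prop :=
  ∃ c : V → Fin (d + 1), K.IsProperColoring c

/-- The perspectivity between two adjacent facets, as a permutation of the whole
vertex set: it swaps the unique vertex of `σ \ τ` with the unique vertex of `τ \ σ`
(and in particular fixes every vertex of `σ ∩ τ`). -/
def perspPerm (σ τ : Finset V) : Equiv.Perm V :=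
  if h : (σ \ τ).Nonempty ∧ (τ \ σ).Nonempty then Equiv.swap h.1.choose h.2.choose
  else 1

/-- The projectivity along a facet path, i.e. the composition of the perspectivities
along consecutive facets. -/
def projPerm : List (Finset V) → Equiv.Perm V
  | _ :: [] => 1
  | [] => 1
  | σ :: τ :: rest => projPerm (τ :: rest) * perspPerm σ τ

/-- The projectivity along a facet path based at `σ0`, restricted to the vertices
of `σ0`.  (For genuine closed facet paths the projectivity preserves `σ0`.) -/
def projRestrict (σ0 : Finset V) (γ : List (Finset V)) : Equiv.Perm {v // v ∈ σ0} :=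
  if h : ∀ v, v ∈ σ0 ↔ projPerm γ v ∈ σ0 then (projPerm γ).subtypePerm (fun v => (h v).symm) else 1

/-- The group of projectivities `Π(K, σ0)`: the subgroup of permutations of the
vertices of `σ0` given by projectivities along closed facet paths based at `σ0`. -/
def projGroup (K : SComplex V) (σ0 : Finset V) : Subgroup (Equiv.Perm {v // v ∈ σ0}) :=
  Subgroup.closure {π | ∃ γ, K.IsClosedPathAt σ0 γ ∧ π = projRestrict σ0 γ}

/-- `K` is nice: pure, (locally) strongly connected and locally strongly simply
connected (the link of every face of codimension at least two is simply connected). -/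
def Nice (K : SComplex V) (d : ℕ) : Prop :=
  K.Pure d ∧ K.StronglyConnected ∧ K.LocallyStronglyConnected ∧
    ∀ f ∈ K.faces, f.card + 2 ≤ d + 1 → SimplyConnectedSpace ↥((K.link f).space)

end SComplex

namespace SComplex
variable {V V' : Type}

/-- Piecewise linear interpolation through a list of points. -/
def plInterp (pts : List (V → ℝ)) (t : ℝ) : V → ℝ :=
  let n : ℕ := pts.length - 1
  let s : ℝ := t * n
  let i : ℕ := min ⌊s⌋₊ (n - 1)
  (1 - (s - i)) • pts.getD i 0 + (s - i) • pts.getD (i + 1) 0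

/-- The waypoints of the barycentric path associated with a facet path: the barycenters
of the facets, interleaved with the barycenters of the connecting ridges. -/
def baryList : List (Finset V) → List (V → ℝ)
  | [] => []
  | [σ] => [barycenter σ]
  | σ :: τ :: rest => barycenter σ :: barycenter (σ ∩ τ) :: baryList (τ :: rest)

/-- The piecewise linear path `γ̄` through the barycenters, associated with a
facet path `γ`. -/
def facetPathFun (γ : List (Finset V)) : ℝ → (V → ℝ) :=
  fun t => plInterp (baryList γ) t

/-- The realization of the complement `|K| \ |K_odd|` of the odd subcomplex. -/
def oddCompl (K : SComplex V) (d : ℕ) : Set (V → ℝ) := K.space \ K.oddReal d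

/-- The realization of the odd subcomplex, as a subset of the subtype `|K|`. -/
def oddSet (K : SComplex V) (d : ℕ) : Set ↥(K.space) := {y | (y : V → ℝ) ∈ K.oddReal d}

/-- A closed facet path is null-homotopic if the associated barycentric path `γ̄` is
null-homotopic in `|K|`. -/
def FacetPathNullHomotopic (K : SComplex V) (γ : List (Finset V)) : Prop :=
  ∃ (x₀ : ↥(K.space)) (p : Path x₀ x₀),
    (∀ t : unitInterval, (p t : V → ℝ) = facetPathFun γ (t : ℝ)) ∧
    p.Homotopic (Path.refl x₀)

end SComplex

/-- A homomorphism defined on loops at `a` which only depends on the homotopy class of a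
loop and is multiplicative with respect to concatenation; equivalently, a homomorphism
from the fundamental group `π₁(A, a)` to `G`. -/
structure LoopHom (A : Type*) [TopologicalSpace A] (a : A) (G : Type*) [Group G] where
  toFun : Path a a → G
  homotopy_invariant : ∀ p q : Path a a, p.Homotopic q → toFun p = toFun q
  map_trans : ∀ p q : Path a a, toFun (p.trans q) = toFun p * toFun q
  map_refl : toFun (Path.refl a) = 1

namespace SComplex
variable {V V' : Type}

/-- `h` is the characteristic homomorphism
`h_K : π₁(|K| \ |K_odd|, y₀) → Π(K, σ₀)` of a nice simplicial complex `K`: it is based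
at the barycenter `y₀` of `σ₀` and sends (the class of) the piecewise linear barycentric
path `γ̄` of a closed facet path `γ` based at `σ₀` to the projectivity `⟨γ⟩`. -/
def IsProjectivityHom (K : SComplex V) (d : ℕ) (σ₀ : Finset V) (x₀ : ↥(K.oddCompl d))
    (h : LoopHom ↥(K.oddCompl d) x₀ (Equiv.Perm {v // v ∈ σ₀})) : Prop :=
  K.IsFacet σ₀ ∧ (x₀ : V → ℝ) = barycenter σ₀ ∧
    ∀ γ : List (Finset V), K.IsClosedPathAt σ₀ γ →
      ∀ p : Path x₀ x₀, (∀ t : unitInterval, (p t : V → ℝ) = facetPathFun γ (t : ℝ)) →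
        h.toFun p = projRestrict σ₀ γ

end SComplex

namespace SComplex
variable {V V' : Type}

/-- The index set for the partial unfolding: pairs `(σ, v)` of a facet together with
one of its vertices. -/
def UnfoldIdx (K : SComplex V) : Type :=
  {p : Finset V × V // K.IsFacet p.1 ∧ p.2 ∈ p.1}

/-- The points of the disjoint union of the labeled geometric facets `(|σ|, v)`. -/
def UnfoldPts (K : SComplex V) : Type :=
  Σ i : K.UnfoldIdx, ↥(closedSimplex i.1.1)

instance (K : SComplex V) : TopologicalSpace K.UnfoldPts :=
  inferInstanceAs (TopologicalSpace (Σ i : K.UnfoldIdx, ↥(closedSimplex i.1.1)))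

/-- The gluing relation of the partial unfolding: `(|σ|, v)` and `(|τ|, w)` are
identified along their common ridge `|σ ∩ τ|` whenever `σ`, `τ` are adjacent facets
with `⟨σ,τ⟩(v) = w`. -/
def unfoldRel (K : SComplex V) (a b : K.UnfoldPts) : Prop :=
  (a.2 : V → ℝ) = (b.2 : V → ℝ) ∧
    K.Adj a.1.1.1 b.1.1.1 ∧ perspPerm a.1.1.1 b.1.1.1 a.1.1.2 = b.1.1.2 ∧
      ∀ w, (a.2 : V → ℝ) w ≠ 0 → w ∈ a.1.1.1 ∩ b.1.1.1

/-- The partial unfolding `K̂` of `K`, as a topological space. -/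
def Unfolding (K : SComplex V) : Type := Quot (K.unfoldRel)

instance (K : SComplex V) : TopologicalSpace K.Unfolding :=
  inferInstanceAs (TopologicalSpace (Quot K.unfoldRel))

/-- The canonical projection `p : K̂ → K` of the partial unfolding. -/
def unfoldProj (K : SComplex V) : K.Unfolding → ↥(K.space) :=
  Quot.lift (fun a => ⟨(a.2 : V → ℝ), a.1.1.1, a.1.2.1.1, a.2.2⟩)
    (fun _ _ h => Subtype.ext h.1)

end SComplex


/-- The restriction of a map `p` to the preimage of a subset `S` of the target,
as a map between subspaces. -/
def restrictTo {X Y : Type*} (p : X → Y) (S : Set Y) : (p ⁻¹' S : Set X) → S :=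
  fun x => ⟨p x, x.2⟩

/-- `p : X → Y` is a branched cover with branching set `B`: it is a continuous
surjection, the complement of `B` is dense, the restriction of `p` to the preimage of
`Y \ B` is a covering (the associated cover), and `B` is minimal with this property. -/
def IsBranchedCovering {X Y : Type*} [TopologicalSpace X] [TopologicalSpace Y]
    (p : X → Y) (B : Set Y) : Prop :=
  Continuous p ∧ Function.Surjective p ∧ Dense Bᶜ ∧
    IsCoveringMap (restrictTo p Bᶜ) ∧
    ∀ S : Set Y, IsCoveringMap (restrictTo p Sᶜ) → B ⊆ S


/-- `m` is the monodromy homomorphism of the branched cover `p` (with branching set `B`)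
based at the point `y0 ∉ B`: for every loop `γ` at `y0` in `Y \ B` and every point `x` of
the fiber over `y0`, `m [γ]` sends `x` to the endpoint of any lift of `γ` starting at `x`. -/
def IsMonodromy {X Y : Type*} [TopologicalSpace X] [TopologicalSpace Y]
    (p : X → Y) (B : Set Y) (y0 : ↥(Bᶜ))
    (m : LoopHom ↥(Bᶜ) y0 (Equiv.Perm ↥(p ⁻¹' {(y0 : Y)}))) : Prop :=
  ∀ (γ : Path y0 y0) (x z : ↥(p ⁻¹' {(y0 : Y)})) (α : Path (x : X) (z : X)),
    (∀ t, p (α t) = (γ t : Y)) → (m.toFun γ) x = z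

/-- A loop `γ` (in an ambient space `Y`) is null-homotopic within a subset `S`. -/
def NullHomotopicIn {Y : Type*} [TopologicalSpace Y] (S : Set Y) {y0 : Y}
    (h0 : y0 ∈ S) (γ : Path y0 y0) : Prop :=
  ∃ δ : Path (⟨y0, h0⟩ : S) (⟨y0, h0⟩ : S),
    (∀ t, (δ t : Y) = γ t) ∧ δ.Homotopic (Path.refl _)

/-- A point `b` of a subset `B ⊆ Y` is nonsingular (a locally flat point of a
codimension-two submanifold) if near `b` the pair `(Y, B)` looks like
`(ℝⁿ, ℝⁿ⁻²)`. -/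
def FlatPoint {Y : Type*} [TopologicalSpace Y] (B : Set Y) (b : Y) : Prop :=
  ∃ n : ℕ, ∃ hn : 2 ≤ n, ∃ U : Set Y, IsOpen U ∧ b ∈ U ∧
    ∃ φ : ↥U ≃ₜ EuclideanSpace ℝ (Fin n),
      ∀ u : ↥U, (u : Y) ∈ B ↔ (φ u ⟨n - 2, by omega⟩ = 0 ∧ φ u ⟨n - 1, by omega⟩ = 0)

/-- A meridial loop of `B` around the point `b ∈ B`: a loop running in `U \ B` for some
neighborhood `U` of `b`, which is not null-homotopic in `U \ B`. -/
def IsMeridialLoop {Y : Type*} [TopologicalSpace Y] (B : Set Y) (b : Y) {y0 : Y}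
    (γ : Path y0 y0) : Prop :=
  b ∈ B ∧ ∃ U : Set Y, IsOpen U ∧ b ∈ U ∧ (∀ t, γ t ∈ U \ B) ∧
    ∃ h0 : y0 ∈ U \ B, ¬ NullHomotopicIn (U \ B) h0 γ

/-- A branched cover with monodromy `m` is simple if the monodromy of every meridial
loop around a nonsingular point of the branching set is a transposition. -/
def IsSimpleMonodromy {X Y : Type*} [TopologicalSpace X] [TopologicalSpace Y]
    (p : X → Y) (B : Set Y) (y0 : ↥(Bᶜ))
    (m : LoopHom ↥(Bᶜ) y0 (Equiv.Perm ↥(p ⁻¹' {(y0 : Y)}))) : Prop :=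
  ∀ γ : Path y0 y0,
    (∃ b, FlatPoint B b ∧ IsMeridialLoop B b ((γ : Path y0 y0).map continuous_subtype_val)) →
      (m.toFun γ).IsSwap

/-- A branched cover is `k`-fold if the generic fiber has `k` points. -/
def IsKFold {X Y : Type*} [TopologicalSpace X] [TopologicalSpace Y]
    (p : X → Y) (B : Set Y) (k : ℕ) : Prop :=
  ∀ y : Y, y ∉ B → Nat.card (p ⁻¹' {y}) = k

/-- Equivalence of branched covers: homeomorphisms of total and base spaces carrying
one branching set to the other and commuting with the projections. -/
def BranchedCoverEquiv {X Y X' Y' : Type*} [TopologicalSpace X] [TopologicalSpace Y]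
    [TopologicalSpace X'] [TopologicalSpace Y']
    (p : X → Y) (B : Set Y) (p' : X' → Y') (B' : Set Y') : Prop :=
  ∃ (φ : X ≃ₜ X') (ψ : Y ≃ₜ Y'), ψ '' B = B' ∧ ∀ x, p' (φ x) = ψ (p x)


namespace SComplex
variable {V V' : Type}

/-- Two nice (pure `d`-dimensional) simplicial complexes `K`, `K'` are color equivalent:
there are base facets `σ₀`, `σ₀'`, a homeomorphism of pairs
`φ : (|K|, |K_odd|) → (|K'|, |K'_odd|)` taking the barycenter of `σ₀` to the
barycenter of `σ₀'`, and a bijection `ψ : V(σ₀) → V(σ₀')` intertwining the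
characteristic homomorphisms: `ψ⁎ ∘ h_K = h_{K'} ∘ φ⁎`. -/
def ColorEquivalent (K : SComplex V) (K' : SComplex V') (d : ℕ) : Prop :=
  ∃ (σ₀ : Finset V) (σ₀' : Finset V') (x₀ : ↥(K.oddCompl d)) (x₀' : ↥(K'.oddCompl d))
    (hK : LoopHom ↥(K.oddCompl d) x₀ (Equiv.Perm {v // v ∈ σ₀}))
    (hK' : LoopHom ↥(K'.oddCompl d) x₀' (Equiv.Perm {v // v ∈ σ₀'})),
    K.IsProjectivityHom d σ₀ x₀ hK ∧ K'.IsProjectivityHom d σ₀' x₀' hK' ∧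
    ∃ φ : ↥(K.space) ≃ₜ ↥(K'.space),
      (∀ y : ↥(K.space), (y : V → ℝ) ∈ K.oddReal d ↔ (φ y : V' → ℝ) ∈ K'.oddReal d) ∧
      (φ ⟨(x₀ : V → ℝ), x₀.2.1⟩ : V' → ℝ) = (x₀' : V' → ℝ) ∧
      ∃ ψ : {v // v ∈ σ₀} ≃ {v // v ∈ σ₀'},
        ∀ (γ : Path x₀ x₀) (γ' : Path x₀' x₀'),
          (∀ t : unitInterval, (φ ⟨((γ t : ↥(K.oddCompl d)) : V → ℝ), (γ t).2.1⟩ : V' → ℝ)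
            = ((γ' t : ↥(K'.oddCompl d)) : V' → ℝ)) →
          hK'.toFun γ' = (ψ.permCongr) (hK.toFun γ)

end SComplex

namespace SComplex
variable {V V' W : Type}

/-- An isomorphism of simplicial complexes: a bijection of the vertex sets inducing a
bijection of the face sets. -/
structure SIso (K : SComplex V) (L : SComplex W) where
  toEquiv : V ≃ W
  maps : ∀ s : Finset V, s ∈ K.faces ↔ s.image toEquiv ∈ L.faces

/-- `K'` is a (geometric) subdivision of `K`: there is a homeomorphism of the
realizations mapping each closed simplex of `K'` affinely into a closed simplex
of `K`. -/
def Subdivides (K' : SComplex W) (K : SComplex V) : Prop :=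
  ∃ φ : ↥(K'.space) ≃ₜ ↥(K.space),
    ∀ s ∈ K'.faces, ∃ t ∈ K.faces,
      (∀ x : ↥(K'.space), (x : W → ℝ) ∈ closedSimplex s → (φ x : V → ℝ) ∈ closedSimplex t) ∧
      (∀ (x y z : ↥(K'.space)) (a b : ℝ), 0 ≤ a → 0 ≤ b → a + b = 1 →
        (x : W → ℝ) ∈ closedSimplex s → (y : W → ℝ) ∈ closedSimplex s →
        (z : W → ℝ) = a • (x : W → ℝ) + b • (y : W → ℝ) →
        (φ z : V → ℝ) = a • (φ x : V → ℝ) + b • (φ y : V → ℝ))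

/-- Two simplicial complexes are PL-homeomorphic if they have a common subdivision up
to simplicial isomorphism. -/
def PLHomeo (K : SComplex V) (L : SComplex W) : Prop :=
  ∃ (U₁ U₂ : Type) (K₁ : SComplex U₁) (K₂ : SComplex U₂),
    Subdivides K₁ K ∧ Subdivides K₂ L ∧ Nonempty (SIso K₁ K₂)

/-- The full `d`-simplex as a simplicial complex. -/
def simplexComplex (d : ℕ) : SComplex (Fin (d + 1)) where
  faces := {s | s.Nonempty}
  nonempty_of_mem _ hs := hs
  down_closed _ _ _ _ h := h

/-- The boundary complex of the `(d+1)`-simplex. -/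
def boundaryComplex (d : ℕ) : SComplex (Fin (d + 2)) where
  faces := {s | s.Nonempty ∧ s ≠ Finset.univ}
  nonempty_of_mem _ hs := hs.1
  down_closed s hs t hts htne :=
    ⟨htne, fun h => hs.2 (Finset.univ_subset_iff.mp (h ▸ hts))⟩

/-- A combinatorial `d`-ball: a complex PL-homeomorphic to the `d`-simplex. -/
def CombBall (d : ℕ) (K : SComplex V) : Prop := PLHomeo K (simplexComplex d)

/-- A combinatorial `d`-sphere: a complex PL-homeomorphic to the boundary of the
`(d+1)`-simplex. -/
def CombSphere (d : ℕ) (K : SComplex V) : Prop := PLHomeo K (boundaryComplex d)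

/-- A combinatorial `d`-manifold: a pure complex all of whose vertex links are
combinatorial `(d-1)`-spheres or `(d-1)`-balls. -/
def CombManifold (K : SComplex V) (d : ℕ) : Prop :=
  K.Pure d ∧ ∀ v : V, ({v} : Finset V) ∈ K.faces →
    CombSphere (d - 1) (K.link {v}) ∨ CombBall (d - 1) (K.link {v})

/-- The faces of the boundary of a pure complex: faces of ridges contained in exactly
one facet. -/
def boundaryFaces (K : SComplex V) : Set (Finset V) :=
  {s | s.Nonempty ∧ ∃ r, s ⊆ r ∧ r ∈ K.faces ∧
    (∃ σ, K.IsFacet σ ∧ r ⊆ σ ∧ r.card + 1 = σ.card) ∧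
    (∀ σ τ, K.IsFacet σ → K.IsFacet τ → r ⊆ σ → r ⊆ τ → σ = τ)}

/-- The boundary subcomplex `∂K` of a pure simplicial complex. -/
def boundary (K : SComplex V) : SComplex V where
  faces := K.boundaryFaces
  nonempty_of_mem _ hs := hs.1
  down_closed _ hs t hts htne :=
    ⟨htne, hs.2.elim fun r hr => ⟨r, hts.trans hr.1, hr.2⟩⟩

/-- A closed complex has empty boundary. -/
def IsClosed' (K : SComplex V) : Prop := K.boundaryFaces = ∅

/-- A coherent orientation of a pure simplicial complex: an alternating assignment of
signs to ordered facets such that adjacent facets induce opposite orientations on their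
common ridge. -/
structure SOrientation (K : SComplex V) where
  sign : List V → ℤ
  alternating : ∀ (l₁ l₂ : List V) (a b : V),
    sign (l₁ ++ a :: b :: l₂) = - sign (l₁ ++ b :: a :: l₂)
  facet_sign : ∀ l : List V, l.Nodup → K.IsFacet l.toFinset → sign l = 1 ∨ sign l = -1
  coherent : ∀ σ τ : Finset V, K.Adj σ τ → ∀ l : List V, l.Nodup → l.toFinset = σ ∩ τ →
    ∀ a b : V, a ∈ σ \ τ → b ∈ τ \ σ → sign (a :: l) = - sign (b :: l)

/-- An orientable complex. -/
def Orientable (K : SComplex V) : Prop := Nonempty (SOrientation K)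

/-- `K'` arises from `K` by stellar subdivision of the face `e` with new vertex `w`. -/
def IsStellarSubdivisionAt (K K' : SComplex V) (e : Finset V) (w : V) : Prop :=
  e ∈ K.faces ∧ (∀ s ∈ K.faces, w ∉ s) ∧
    K'.faces = {s | s ∈ K.faces ∧ ¬ e ⊆ s} ∪
      {s | ∃ t u : Finset V, t ⊆ e ∧ t ≠ e ∧ (u ∈ (K.link e).faces ∨ u = ∅) ∧
        s = insert w (t ∪ u)}

/-- A face of the complex `c_k` (the boundary of the `(k+1)`-dimensional cross polytope
with one facet removed) placed on the vertex set `f ∪ ν(f)`, where `ν` assigns to each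
vertex of `f` its antipodal copy: a nonempty set of vertices picking at most one of
`v, ν v` for each `v ∈ f`, and different from `f` itself (the removed facet). -/
def IsCrossFace (f : Finset V) (ν : V → V) (c : Finset V) : Prop :=
  c.Nonempty ∧ c ⊆ f ∪ f.image ν ∧ (∀ v ∈ f, ¬ (v ∈ c ∧ ν v ∈ c)) ∧ c ≠ f

/-- `K'` arises from `K` by anti-prismatic subdivision of the face `f`, where `ν`
provides the new (antipodal) copy of each vertex of `f`:
`a_f(K) = (K \ st_K(f)) ∪ (c_k * lk_K(f))`. -/
def IsAntiPrismaticAt (K K' : SComplex V) (f : Finset V) (ν : V → V) : Prop :=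
  f ∈ K.faces ∧ Set.InjOn ν ↑f ∧ (∀ v ∈ f, ∀ s ∈ K.faces, ν v ∉ s) ∧
    (∀ v ∈ f, ∀ w ∈ f, ν v ≠ ν w → v ≠ w) ∧
    K'.faces = {s | s ∈ K.faces ∧ ¬ f ⊆ s} ∪
      {s | ∃ c u : Finset V, (IsCrossFace f ν c ∨ c = ∅) ∧
        (u ∈ (K.link f).faces ∨ u = ∅) ∧ s = c ∪ u ∧ s.Nonempty}

/-- The recursive anti-prismatic subdivision `a(K)`: all faces of `K` of dimension at
least one are subdivided anti-prismatically, from the facets down to the edges. -/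
def IsAntiPrismaticSubdivision (K K' : SComplex V) : Prop :=
  ∃ (fs : List (Finset V)) (Ks : ℕ → SComplex V) (νs : ℕ → V → V),
    (∀ s, s ∈ fs ↔ s ∈ K.faces ∧ 2 ≤ s.card) ∧ fs.Nodup ∧
    fs.Pairwise (fun a b => b.card ≤ a.card) ∧
    Ks 0 = K ∧ Ks fs.length = K' ∧
    ∀ i : ℕ, ∀ h : i < fs.length,
      IsAntiPrismaticAt (Ks i) (Ks (i + 1)) (fs.get ⟨i, h⟩) (νs i)


end SComplex

namespace SComplex
variable {V V' W : Type}

/-- The image of a simplicial complex under a vertex map (closed downwards). -/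
def imageComplex (g : V → W) (K : SComplex V) : SComplex W where
  faces := {t | t.Nonempty ∧ ∃ s ∈ K.faces, t ⊆ s.image g}
  nonempty_of_mem _ h := h.1
  down_closed _ hs t hts htne := ⟨htne, hs.2.elim fun u hu => ⟨u, hu.1, hts.trans hu.2⟩⟩

/-- The vertex set of a simplicial complex. -/
def vertices (K : SComplex V) : Set V := {v | ({v} : Finset V) ∈ K.faces}

end SComplex

/-- Extension of a function by zero along a sum type. -/
def extendBy0 {V : Type} (x : V → ℝ) : V ⊕ ℕ → ℝ := Sum.elim x 0




/-- the Euclidean space ℝⁿ -/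
abbrev Euc (n : ℕ) : Type := EuclideanSpace ℝ (Fin n)

/-- the closed unit 4-ball -/
def Disk4 : Set (Euc 4) := Metric.closedBall 0 1
/-- the unit 3-sphere -/
def Sph3 : Set (Euc 4) := Metric.sphere 0 1
/-- the unit 4-sphere -/
def Sph4 : Set (Euc 5) := Metric.sphere 0 1
/-- the closed unit 2-ball -/
def Disk2 : Set (Euc 2) := Metric.closedBall 0 1

/-- The open unit ball of `ℂ²`, the local model for an (open) 4-ball. -/
def ballCC : Set (ℂ × ℂ) := {p | ‖p.1‖ ^ 2 + ‖p.2‖ ^ 2 < 1}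

/-- The trefoil knot on the unit 3-sphere of `ℂ²`: `z² = w³`. -/
def trefoilCC : Set (ℂ × ℂ) := {p | ‖p.1‖ ^ 2 + ‖p.2‖ ^ 2 = 1 ∧ p.1 ^ 2 = p.2 ^ 3}

/-- The Hopf link on the unit 3-sphere of `ℂ²`: `z ⬝ w = 0`. -/
def hopfCC : Set (ℂ × ℂ) := {p | ‖p.1‖ ^ 2 + ‖p.2‖ ^ 2 = 1 ∧ p.1 * p.2 = 0}

/-- The open cone (inside the open unit ball) over a subset of the unit sphere of `ℂ²`. -/
def coneCC (L : Set (ℂ × ℂ)) : Set (ℂ × ℂ) := {x | ∃ t : ℝ, 0 ≤ t ∧ t < 1 ∧ ∃ l ∈ L, x = t • l}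

/-- The flat local model of a locally flat PL surface point: a complex line in the ball. -/
def flatCC : Set (ℂ × ℂ) := {p | p.2 = 0 ∧ p ∈ ballCC}

/-- Near `y`, the pair `(Y, B)` looks like the pair `(open 4-ball of ℂ², Model)`. -/
def LocalPairCC {Y : Type*} [TopologicalSpace Y] (B : Set Y) (y : Y)
    (Model : Set (ℂ × ℂ)) : Prop :=
  ∃ U : Set Y, IsOpen U ∧ ∃ hy : y ∈ U, ∃ φ : ↥U ≃ₜ ↥ballCC,
    (φ ⟨y, hy⟩ : ℂ × ℂ) = 0 ∧ ∀ u : ↥U, (u : Y) ∈ B ↔ (φ u : ℂ × ℂ) ∈ Model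

/-- `B` is an immersed PL surface with a finite number of cusp singularities (cones over
the trefoil knot) and node singularities (cones over the Hopf link), and locally flat
elsewhere. -/
def IsCuspNodeSurface {Y : Type*} [TopologicalSpace Y] (B : Set Y) : Prop :=
  ∃ Z : Set Y, Z.Finite ∧ Z ⊆ B ∧
    (∀ y ∈ B \ Z, LocalPairCC B y flatCC) ∧
    (∀ y ∈ Z, LocalPairCC B y (coneCC trefoilCC) ∨ LocalPairCC B y (coneCC hopfCC))

/-- `H` is a 4-dimensional handle of index `k` attached to `A`: it is a copy of
`Dᵏ × D⁴⁻ᵏ` glued to `A` exactly along `(∂Dᵏ) × D⁴⁻ᵏ`. -/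
def IsHandle (M : Type*) [TopologicalSpace M] (k : ℕ) (A H : Set M) : Prop :=
  ∃ φ : ↥H ≃ₜ ↥((Metric.closedBall (0 : Euc k) 1) ×ˢ (Metric.closedBall (0 : Euc (4 - k)) 1)),
    ∀ x : ↥H, (x : M) ∈ A ↔ ‖(φ x : Euc k × Euc (4 - k)).1‖ = 1

/-- `B` arises from `A` by attaching a handle of index `k`. -/
def IsHandleAttachment (M : Type*) [TopologicalSpace M] (k : ℕ) (A B : Set M) : Prop :=
  A ⊆ B ∧ ∃ H : Set M, B = A ∪ H ∧ IsHandle M k A H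

/-- `M = H⁰ ∪ λ H¹ ∪ μ H²`: `M` is built from a single 0-handle (a 4-ball) by attaching
`lam` 1-handles and `mu` 2-handles. -/
def HandleDecomp012 (M : Type*) [TopologicalSpace M] (lam mu : ℕ) : Prop :=
  ∃ A : ℕ → Set M,
    Nonempty (↥(A 0) ≃ₜ ↥Disk4) ∧
    (∀ i, i < lam → IsHandleAttachment M 1 (A i) (A (i + 1))) ∧
    (∀ i, lam ≤ i → i < lam + mu → IsHandleAttachment M 2 (A i) (A (i + 1))) ∧
    A (lam + mu) = Set.univ

/-- A standard flat 2-disc in the 4-ball, at height `c` in the third coordinate. -/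
def stdDisc (c : ℝ) : Set ↥Disk4 :=
  {y | ((y : Euc 4) 0) ^ 2 + ((y : Euc 4) 1) ^ 2 ≤ (1:ℝ)/4 ∧ (y : Euc 4) 2 = c ∧ (y : Euc 4) 3 = 0}

/-- A ribbon manifold in a space `Y` (≅ the 4-ball): a collection of unknotted, unlinked,
pairwise disjoint 2-balls `P₀, …, P_lam` and `Q`, together with `mu` ribbons: 2-balls
attached to the `Pⱼ` along pairs of arcs in the boundaries. -/
structure RibbonManifold (Y : Type*) [TopologicalSpace Y] (lam mu : ℕ) where
  P : Fin (lam + 1) → Set Y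
  Q : Set Y
  R : Fin mu → Set Y
  hP : (j : Fin (lam + 1)) → ↥(P j) ≃ₜ ↥Disk2
  hQ : ↥Q ≃ₜ ↥Disk2
  hR : (i : Fin mu) → ↥(R i) ≃ₜ ↥Disk2
  disjointPP : ∀ j j', j ≠ j' → P j ∩ P j' = ∅
  disjointPQ : ∀ j, P j ∩ Q = ∅
  disjointRQ : ∀ i, R i ∩ Q = ∅
  disjointRR : ∀ i i', i ≠ i' → R i ∩ R i' ⊆ ⋃ j, P j
  /-- the 2-balls `P₀, …, P_lam, Q` are unknotted and unlinked -/
  unlinked : ∃ Φ : Y ≃ₜ ↥Disk4,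
    (∀ j : Fin (lam + 1), Φ '' (P j) = stdDisc (((j : ℕ) + 1 : ℝ) / (lam + 3))) ∧
    Φ '' Q = stdDisc (((lam + 2 : ℕ) : ℝ) / (lam + 3))
  /-- each ribbon meets the discs in exactly two arcs, lying in the boundaries -/
  ribbon : ∀ i : Fin mu, ∃ a a' : Set Y,
    (R i ∩ ((⋃ j, P j) ∪ Q)) = a ∪ a' ∧
    Nonempty (↥a ≃ₜ ↥(Set.Icc (0:ℝ) 1)) ∧ Nonempty (↥a' ≃ₜ ↥(Set.Icc (0:ℝ) 1)) ∧
    (∀ y ∈ a ∪ a', ∀ hy : y ∈ R i, ‖(hR i ⟨y, hy⟩ : Euc 2)‖ = 1) ∧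
    (∃ j, a ⊆ P j ∧ ∀ y ∈ a, ∀ hy : y ∈ P j, ‖(hP j ⟨y, hy⟩ : Euc 2)‖ = 1) ∧
    (∃ j', a' ⊆ P j' ∧ ∀ y ∈ a', ∀ hy : y ∈ P j', ‖(hP j' ⟨y, hy⟩ : Euc 2)‖ = 1)

/-- The underlying set of a ribbon manifold. -/
def RibbonManifold.total {Y : Type*} [TopologicalSpace Y] {lam mu : ℕ}
    (rm : RibbonManifold Y lam mu) : Set Y :=
  (⋃ j, rm.P j) ∪ rm.Q ∪ ⋃ i, rm.R i

/-- `B ⊆ Y` is a ribbon manifold (with respect to an identification of `Y` with the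
4-ball). -/
def IsRibbonSet {Y : Type*} [TopologicalSpace Y] (B : Set Y) : Prop :=
  ∃ (lam mu : ℕ) (rm : RibbonManifold Y lam mu), B = rm.total

/-- A finite regular CW-complex structure on the space `X`: finitely many cells with
characteristic maps `χ i` from Euclidean balls, each injective on the closed ball
(regularity), such that the open cells partition `X` and the boundary of each cell is
contained in the union of the closed cells of smaller dimension. -/
structure FinRegCW (X : Type*) [TopologicalSpace X] where
  ι : Type
  finite : Finite ι
  dim : ι → ℕ
  χ : (i : ι) → Euc (dim i) → X
  continuous : ∀ i, Continuous (χ i)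
  injective : ∀ i, Set.InjOn (χ i) (Metric.closedBall 0 1)
  cover : ∀ x : X, ∃! i : ι, x ∈ χ i '' Metric.ball 0 1
  attach : ∀ i, χ i '' Metric.sphere 0 1 ⊆
    ⋃ j ∈ {j : ι | dim j < dim i}, χ j '' Metric.closedBall 0 1

namespace FinRegCW

variable {X : Type*} [TopologicalSpace X] (C : FinRegCW X)

/-- The dimension of a finite CW-complex. -/
def cwDim : Prop → Prop := id

/-- A subcomplex: a set of cells containing, for each of its cells, all the cells
meeting the boundary of that cell. -/
def IsSubcomplex (Y : Set C.ι) : Prop :=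
  ∀ i ∈ Y, ∀ j, (C.χ i '' Metric.sphere 0 1 ∩ C.χ j '' Metric.ball 0 1).Nonempty → j ∈ Y

/-- The `l`-skeleton of a subcomplex `Y`: the union of the closed cells of `Y` of
dimension at most `l`. -/
def skel (Y : Set C.ι) (l : ℕ) : Set X :=
  ⋃ i ∈ {i : C.ι | i ∈ Y ∧ C.dim i ≤ l}, C.χ i '' Metric.closedBall 0 1

/-- `(K, e)` is a triangulation of the subset `S ⊆ X` refining the cell structure:
each closed simplex of `K` is carried into a closed cell. -/
def IsTriangulationOf (S : Set X) {V : Type} (K : SComplex V)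
    (e : ↥(K.space) ≃ₜ ↥S) : Prop :=
  ∀ s ∈ K.faces, ∃ i : C.ι, ∀ x : ↥(K.space),
    (x : V → ℝ) ∈ SComplex.closedSimplex s → ((e x : ↥S) : X) ∈ C.χ i '' Metric.closedBall 0 1

end FinRegCW

/-- The closed upper hemisphere of the 3-sphere. -/
def HplusS3 : Set ↥Sph3 := {y | 0 ≤ (y : Euc 4) 3}
/-- The closed lower hemisphere of the 3-sphere. -/
def HminusS3 : Set ↥Sph3 := {y | (y : Euc 4) 3 ≤ 0}

/-- The standard trefoil knot on the 3-sphere (identifying `ℝ⁴ = ℂ²`): `z² = w³`. -/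
def stdTrefoilS3 : Set ↥Sph3 :=
  {y | (⟨(y : Euc 4) 0, (y : Euc 4) 1⟩ : ℂ) ^ 2 = (⟨(y : Euc 4) 2, (y : Euc 4) 3⟩ : ℂ) ^ 3}

/-- The standard Hopf link on the 3-sphere: `z ⬝ w = 0`. -/
def stdHopfS3 : Set ↥Sph3 :=
  {y | ((y : Euc 4) 0 = 0 ∧ (y : Euc 4) 1 = 0) ∨ ((y : Euc 4) 2 = 0 ∧ (y : Euc 4) 3 = 0)}

/-- The standard unknot on the 3-sphere. -/
def stdUnknotS3 : Set ↥Sph3 := {y | (y : Euc 4) 2 = 0 ∧ (y : Euc 4) 3 = 0}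

/-- A link in the 3-sphere is equivalent to a standard one if some self-homeomorphism of
the sphere carries one to the other. -/
def IsEquivLink (L std : Set ↥Sph3) : Prop := ∃ Ψ : ↥Sph3 ≃ₜ ↥Sph3, Ψ '' L = std

/-- `p₂` is obtained from `p₁` by a single local move (`C±` or `N±`, according to the
standard link `std`, the trefoil for `C±` and the Hopf link for `N±`): the branching
sets and the covers agree away from an open set `U`, and the two local tangles, glued
along their boundary into the double of `U` (a 3-sphere presented as two hemispheres),
form the link `std`. -/
def IsCNMove {W : Type*} [TopologicalSpace W] (p₁ p₂ : W → ↥Sph3) (B₁ B₂ : Set ↥Sph3)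
    (std : Set ↥Sph3) : Prop :=
  ∃ U : Set ↥Sph3, IsOpen U ∧ B₁ \ U = B₂ \ U ∧
    (∃ κ : ↥(p₁ ⁻¹' (closure U)ᶜ) ≃ₜ ↥(p₂ ⁻¹' (closure U)ᶜ), ∀ x, p₂ (κ x) = p₁ x) ∧
    ∃ (φ₁ : ↥(closure U) ≃ₜ ↥HplusS3) (φ₂ : ↥(closure U) ≃ₜ ↥HminusS3),
      (∀ x : ↥(closure U), (x : ↥Sph3) ∈ frontier U →
        ((φ₁ x : ↥Sph3) = (φ₂ x : ↥Sph3))) ∧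
      IsEquivLink
        ((fun x : ↥(closure U) => (φ₁ x : ↥Sph3)) '' {x | (x : ↥Sph3) ∈ B₁} ∪
          (fun x : ↥(closure U) => (φ₂ x : ↥Sph3)) '' {x | (x : ↥Sph3) ∈ B₂}) std

/-- A tame link in the 3-sphere: a closed 1-submanifold which is locally flat. -/
def IsTameLink (B : Set ↥Sph3) : Prop :=
  ∀ b ∈ B, ∃ U : Set ↥Sph3, IsOpen U ∧ b ∈ U ∧ ∃ φ : ↥U ≃ₜ Euc 3,
    ∀ u : ↥U, (u : ↥Sph3) ∈ B ↔ (φ u 1 = 0 ∧ φ u 2 = 0)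

/-- `p` is a simple 4-fold branched cover of the 3-sphere obtained from a simple 3-fold
branched cover by the addition of a trivial (fourth) sheet: the branching set contains a
distinguished unknotted component `O`; the meridians of the other components fix the
distinguished fiber point `x₄` (they act on the first three sheets only), while the
meridians of `O` move `x₄` (they attach the fourth sheet trivially along `O`). -/
def IsThreePlusTrivial {W : Type*} [TopologicalSpace W] (p : W → ↥Sph3) (B : Set ↥Sph3)
    (y₀ : ↥Bᶜ) (m : LoopHom ↥Bᶜ y₀ (Equiv.Perm ↥(p ⁻¹' {(y₀ : ↥Sph3)}))) : Prop :=
  IsBranchedCovering p B ∧ IsKFold p B 4 ∧ IsMonodromy p B y₀ m ∧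
    IsSimpleMonodromy p B y₀ m ∧
    ∃ (O : Set ↥Sph3) (x₄ : ↥(p ⁻¹' {(y₀ : ↥Sph3)})),
      O ⊆ B ∧ IsEquivLink O stdUnknotS3 ∧
      (∀ γ : Path y₀ y₀,
        (∃ b, b ∈ B \ O ∧ IsMeridialLoop B b (γ.map continuous_subtype_val)) →
          (m.toFun γ) x₄ = x₄) ∧
      (∀ γ : Path y₀ y₀,
        (∃ b, b ∈ O ∧ IsMeridialLoop B b (γ.map continuous_subtype_val)) →
          (m.toFun γ) x₄ ≠ x₄)

/-!
A proper coloring with `d + 1` colors is a bijection from the vertices of each facet onto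
the colors. The two vertices exchanged by a perspectivity then have the same color, so every
projectivity preserves colors, and the image of a vertex of `σ` under a projectivity from `σ`
to `τ` is the unique vertex of `τ` with the same color, independently of the path. A
codimension-2 face `f` uses all colors but two, and every vertex of its link carries one of
these two, which is a 2-coloring of the link.
-/

namespace SComplex

variable {V : Type} {K : SComplex V} {α : Type*} {c : V → α}

theorem Adj.exists_sdiff_eq_singleton {σ τ : Finset V} (h : K.Adj σ τ) :
    ∃ a b, σ \ τ = {a} ∧ τ \ σ = {b} := by
  obtain ⟨-, -, -, hσ, hτ⟩ := h
  have hστ := Finset.card_sdiff_add_card_inter σ τ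
  have hτσ := Finset.card_sdiff_add_card_inter τ σ
  rw [Finset.inter_comm] at hτσ
  obtain ⟨a, ha⟩ := Finset.card_eq_one.mp (show (σ \ τ).card = 1 by omega)
  obtain ⟨b, hb⟩ := Finset.card_eq_one.mp (show (τ \ σ).card = 1 by omega)
  exact ⟨a, b, ha, hb⟩

theorem perspPerm_eq_swap {σ τ : Finset V} {a b : V} (ha : σ \ τ = {a}) (hb : τ \ σ = {b}) :
    perspPerm σ τ = Equiv.swap a b := by
  have hne : (σ \ τ).Nonempty ∧ (τ \ σ).Nonempty := by
    simp only [ha, hb, Finset.singleton_nonempty, and_self]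
  rw [Finset.eq_singleton_iff_unique_mem] at ha hb
  rw [perspPerm, dif_pos hne, ha.2 _ hne.1.choose_spec, hb.2 _ hne.2.choose_spec]

theorem Adj.perspPerm_mem {σ τ : Finset V} (h : K.Adj σ τ) {v : V} (hv : v ∈ σ) :
    perspPerm σ τ v ∈ τ := by
  obtain ⟨a, b, ha, hb⟩ := h.exists_sdiff_eq_singleton
  have hbτσ : b ∈ τ \ σ := hb ▸ Finset.mem_singleton_self b
  rw [perspPerm_eq_swap ha hb]
  by_cases hva : v = a
  · rw [hva, Equiv.swap_apply_left]
    exact (Finset.mem_sdiff.mp hbτσ).1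
  · have hvτ : v ∈ τ := by
      by_contra hvτ
      exact hva (Finset.mem_singleton.mp (ha ▸ Finset.mem_sdiff.mpr ⟨hv, hvτ⟩))
    have hvb : v ≠ b := fun hvb => (Finset.mem_sdiff.mp hbτσ).2 (hvb ▸ hv)
    rwa [Equiv.swap_apply_of_ne_of_ne hva hvb]

theorem IsProperColoring.image_eq_univ [Fintype α] (hc : K.IsProperColoring c)
    {σ : Finset V} (hσ : σ ∈ K.faces) (hcard : σ.card = Fintype.card α) :
    σ.image c = Finset.univ :=
  Finset.eq_univ_of_card _ ((Finset.card_image_of_injOn (hc σ hσ)).trans hcard)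

theorem IsProperColoring.apply_perspPerm [Fintype α] (hc : K.IsProperColoring c)
    {σ τ : Finset V} (h : K.Adj σ τ) (hcard : σ.card = Fintype.card α) (v : V) :
    c (perspPerm σ τ v) = c v := by
  obtain ⟨a, b, ha, hb⟩ := h.exists_sdiff_eq_singleton
  obtain ⟨hbτ, hbσ⟩ := Finset.mem_sdiff.mp (hb ▸ Finset.mem_singleton_self b)
  have hcab : c a = c b := by
    obtain ⟨x, hxσ, hx⟩ := Finset.mem_image.mp
      (hc.image_eq_univ h.1.1 hcard ▸ Finset.mem_univ (c b))
    have hxτ : x ∉ τ := fun hxτ => hbσ (hc τ h.2.1.1 hxτ hbτ hx ▸ hxσ)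
    have hxa : x = a := Finset.mem_singleton.mp (ha ▸ Finset.mem_sdiff.mpr ⟨hxσ, hxτ⟩)
    rwa [← hxa]
  rw [perspPerm_eq_swap ha hb, Equiv.swap_apply_def]
  split_ifs with hva hvb
  · rw [hva, hcab]
  · rw [hvb, hcab]
  · rfl

theorem IsPathFrom.projPerm_mem {γ : List (Finset V)} {σ τ : Finset V}
    (hγ : K.IsPathFrom γ σ τ) {v : V} (hv : v ∈ σ) : projPerm γ v ∈ τ := by
  induction γ generalizing σ v with
  | nil => exact hγ.1.elim
  | cons σ' rest ih =>
    obtain ⟨hpath, hhead, hlast⟩ := hγ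
    cases Option.some.inj hhead
    cases rest with
    | nil => exact (Option.some.inj hlast) ▸ hv
    | cons τ' rest =>
      exact ih ⟨hpath.2, rfl, by rwa [List.getLast?_cons_cons] at hlast⟩
        (hpath.1.perspPerm_mem hv)

theorem IsProperColoring.apply_projPerm [Fintype α] (hc : K.IsProperColoring c) {d : ℕ}
    (hpure : K.Pure d) (hα : Fintype.card α = d + 1) {γ : List (Finset V)}
    (hγ : K.IsFacetPath γ) (v : V) : c (projPerm γ v) = c v := by
  induction γ generalizing v with
  | nil => rfl
  | cons σ rest ih =>
    cases rest with
    | nil => rfl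
    | cons τ rest =>
      change c (projPerm (τ :: rest) (perspPerm σ τ v)) = c v
      rw [ih hγ.2, hc.apply_perspPerm hγ.1 ((hpure σ hγ.1.1).trans hα.symm)]

theorem IsProperColoring.projPerm_apply_eq [Fintype α] (hc : K.IsProperColoring c) {d : ℕ}
    (hpure : K.Pure d) (hα : Fintype.card α = d + 1) {σ τ : Finset V} (hτ : τ ∈ K.faces)
    {γ γ' : List (Finset V)} (hγ : K.IsPathFrom γ σ τ) (hγ' : K.IsPathFrom γ' σ τ)
    {v : V} (hv : v ∈ σ) : projPerm γ v = projPerm γ' v :=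
  hc τ hτ (hγ.projPerm_mem hv) (hγ'.projPerm_mem hv)
    ((hc.apply_projPerm hpure hα hγ.1 v).trans (hc.apply_projPerm hpure hα hγ'.1 v).symm)

theorem projRestrict_eq_one {σ₀ : Finset V} {γ : List (Finset V)}
    (hfix : ∀ v ∈ σ₀, projPerm γ v = v) : projRestrict σ₀ γ = 1 := by
  unfold projRestrict
  split_ifs
  · ext x
    simp only [Equiv.Perm.subtypePerm_apply, hfix x.1 x.2, Equiv.Perm.coe_one, id_eq]
  · rfl

theorem IsProperColoring.projGroup_eq_bot [Fintype α] (hc : K.IsProperColoring c) {d : ℕ}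
    (hpure : K.Pure d) (hα : Fintype.card α = d + 1) {σ₀ : Finset V} (hσ₀ : K.IsFacet σ₀) :
    K.projGroup σ₀ = ⊥ := by
  rw [eq_bot_iff, projGroup, Subgroup.closure_le]
  rintro π ⟨γ, hγ, rfl⟩
  have htrivial : K.IsClosedPathAt σ₀ [σ₀] := ⟨hσ₀, rfl, rfl⟩
  exact projRestrict_eq_one fun v hv =>
    hc.projPerm_apply_eq hpure hα hσ₀.1 hγ htrivial hv

theorem IsProperColoring.isBipartite_link [Fintype α] (hc : K.IsProperColoring c)
    {f : Finset V} (hf : f ∈ K.faces) (hcard : f.card + 2 = Fintype.card α) :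
    IsBipartite (K.link f) := by
  obtain ⟨a, b, hab, hfree⟩ : ∃ a b, a ≠ b ∧ (f.image c)ᶜ = {a, b} := by
    refine Finset.card_eq_two.mp ?_
    rw [Finset.card_compl, Finset.card_image_of_injOn (hc f hf)]
    omega
  have hlink_color : ∀ e ∈ (K.link f).faces, ∀ v ∈ e, c v = a ∨ c v = b := by
    rintro e ⟨-, hef, hefK⟩ v hv
    have hvf : c v ∈ (f.image c)ᶜ := by
      rw [Finset.mem_compl, Finset.mem_image]
      rintro ⟨x, hx, hxv⟩
      have hxe : x = v := hc _ hefK (Finset.mem_union_right e hx) (Finset.mem_union_left f hv) hxv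
      exact Finset.notMem_empty v (hef ▸ Finset.mem_inter.mpr ⟨hv, hxe ▸ hx⟩)
    simpa only [hfree, Finset.mem_insert, Finset.mem_singleton] using hvf
  refine ⟨fun v => decide (c v = a), fun e he v hv w hw hvw => ?_⟩
  have hcvw : c v ≠ c w := fun h =>
    hvw (hc _ he.2.2 (Finset.mem_union_left f hv) (Finset.mem_union_left f hw) h)
  rcases hlink_color e he v hv with hva | hvb <;>
    rcases hlink_color e he w hw with hwa | hwb <;>
    simp_all [hab.symm]

theorem IsProperColoring.oddFaces_eq_empty [Fintype α] (hc : K.IsProperColoring c) {d : ℕ}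
    (hα : Fintype.card α = d + 1) : K.oddFaces d = ∅ := by
  refine Set.eq_empty_of_forall_notMem ?_
  rintro s ⟨-, f, ⟨hf, hcard, hodd⟩, -⟩
  exact hodd (hc.isBipartite_link hf (hcard.trans hα.symm))

end SComplex

theorem foldable_empty_odd_and_trivial_projectivities_general
    {V : Type} (K : SComplex V) (d : ℕ)
    (hpure : K.Pure d)
    (hfold : K.Foldable d) :
    K.oddFaces d = ∅ ∧
    (∀ σ₀ : Finset V, K.IsFacet σ₀ → K.projGroup σ₀ = ⊥) ∧
    (∀ σ τ : Finset V, K.IsFacet σ → K.IsFacet τ →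
      ∀ α β : List (Finset V), K.IsPathFrom α σ τ → K.IsPathFrom β σ τ →
        ∀ v ∈ σ, SComplex.projPerm α v = SComplex.projPerm β v) := by
  obtain ⟨c, hc⟩ := hfold
  have hcard : Fintype.card (Fin (d + 1)) = d + 1 := Fintype.card_fin _
  exact ⟨hc.oddFaces_eq_empty hcard,
    fun σ₀ hσ₀ => hc.projGroup_eq_bot hpure hcard hσ₀,
    fun σ τ _ hτ α β hα hβ v hv => hc.projPerm_apply_eq hpure hcard hτ.1 hα hβ hv⟩

/-- A strongly connected, locally strongly connected, pure, foldable
simplicial complex has empty odd subcomplex and trivial group of projectivities at every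
facet; in particular any two facet paths with the same endpoints induce the same
projectivity. -/
theorem foldable_empty_odd_and_trivial_projectivities
    {V : Type} (K : SComplex V) (d : ℕ)
    (hpure : K.Pure d) (hsc : K.StronglyConnected) (hlsc : K.LocallyStronglyConnected)
    (hfold : K.Foldable d) :
    K.oddFaces d = ∅ ∧
    (∀ σ₀ : Finset V, K.IsFacet σ₀ → K.projGroup σ₀ = ⊥) ∧
    (∀ σ τ : Finset V, K.IsFacet σ → K.IsFacet τ →
      ∀ α β : List (Finset V), K.IsPathFrom α σ τ → K.IsPathFrom β σ τ →
        ∀ v ∈ σ, SComplex.projPerm α v = SComplex.projPerm β v) :=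
  foldable_empty_odd_and_trivial_projectivities_general K d hpure hfold
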